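/- arXiv:2504.05159 — 2 statements merged into one kernel-verified Lean document; each statement's English description precedes it below -/
import Mathlib

section
/- Let p be an odd prime, s ≥ 1, N = (p^s − 1)/2, and let C be the cosine matrix of size N+1. Then the Gram matrix of the rows of C satisfies: (C·Cᵀ)_{u,u} = 2N for every u with 1 ≤ u ≤ N; (C·Cᵀ)_{N+1,N+1} = N+1; (C·Cᵀ)_{u,v} = −1 for all u ≠ v with 1 ≤ u, v ≤ N; and (C·Cᵀ)_{u,N+1} = (C·Cᵀ)_{N+1,u} = 0 for every u with 1 ≤ u ≤ N. -/
/-!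
Write `n = p ^ s = 2 * N + 1`. Since `cos (2π a (n - j) / n) = cos (2π a j / n)`, the entries of
row `a` of `C` add up to `∑_{j < n} cos (2π a j / n)`, the real part of a geometric sum of an
`n`-th root of unity, which is `n` if `n ∣ a` and `0` otherwise. The identity
`4 cos x cos y = 2 cos (x + y) + 2 cos (x - y)` turns the inner product of rows `a` and `b` into
the row sums at `a + b` and `a - b`, minus `1` for the first column, which is counted twice.
For rows `1 ≤ a, b ≤ N` only `a - b = 0` is divisible by `n`.
-/

open Finset Real

theorem sum_range_cos_two_pi_mul_div (n : ℕ) (a : ℤ) :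
    ∑ j ∈ range n, cos (2 * π * a * j / n) = if (n : ℤ) ∣ a then (n : ℝ) else 0 := by
  rcases Nat.eq_zero_or_pos n with rfl | hn
  · simp
  have hζ := Complex.isPrimitiveRoot_exp n hn.ne'
  set w : ℂ := Complex.exp (2 * π * Complex.I / n) ^ a
  have hw_pow_re (j : ℕ) : (w ^ j).re = cos (2 * π * a * j / n) := by
    rw [← zpow_natCast, ← zpow_mul, ← Complex.exp_int_mul,
      ← Complex.exp_ofReal_mul_I_re (2 * π * a * j / n)]
    push_cast
    ring_nf
  have hw_sum : ∑ j ∈ range n, w ^ j = if (n : ℤ) ∣ a then (n : ℂ) else 0 := by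
    split_ifs with h
    · simp [w, (hζ.zpow_eq_one_iff_dvd a).2 h]
    · have hw1 : w ≠ 1 := mt (hζ.zpow_eq_one_iff_dvd a).1 h
      have hwn : w ^ n = 1 := by
        rw [← zpow_natCast, ← zpow_mul, hζ.zpow_eq_one_iff_dvd]
        exact dvd_mul_left _ _
      rw [geom_sum_eq hw1, hwn, sub_self, zero_div]
  simp_rw [← hw_pow_re, ← Complex.re_sum, hw_sum]
  split_ifs <;> simp

theorem sum_range_two_mul_add_one_of_symm {M : Type*} [AddCommMonoid M] (N : ℕ) (f : ℕ → M)
    (hf : ∀ j ≤ 2 * N + 1, f (2 * N + 1 - j) = f j) :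
    ∑ j ∈ range (2 * N + 1), f j = f 0 + 2 • ∑ j ∈ range N, f (j + 1) := by
  have hupper : ∑ j ∈ range N, f (N + j + 1) = ∑ j ∈ range N, f (j + 1) := by
    rw [← sum_range_reflect (fun j => f (j + 1)) N]
    refine sum_congr rfl fun j hj => ?_
    have hj := mem_range.1 hj
    rw [← hf _ (by omega)]
    congr 1
    omega
  rw [sum_range_succ', two_mul, sum_range_add, hupper, two_nsmul, add_comm]

noncomputable def cosineEntry (n : ℕ) (a : ℤ) (j : ℕ) : ℝ :=
  if j = 0 then 1 else 2 * cos (2 * π * a * j / n)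

theorem sum_range_cosineEntry (N : ℕ) (a : ℤ) :
    ∑ j ∈ range (N + 1), cosineEntry (2 * N + 1) a j =
      if ((2 * N + 1 : ℕ) : ℤ) ∣ a then ((2 * N + 1 : ℕ) : ℝ) else 0 := by
  rw [← sum_range_cos_two_pi_mul_div, sum_range_two_mul_add_one_of_symm, sum_range_succ']
  · simp [cosineEntry, nsmul_eq_mul, mul_sum, add_comm]
  · intro j hj
    set n := 2 * N + 1
    have hn : (n : ℝ) ≠ 0 := by positivity
    rw [Nat.cast_sub hj, ← cos_int_mul_two_pi_sub _ a]
    congr 1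
    field_simp
    ring

theorem cosineEntry_mul (n : ℕ) (a b : ℤ) (j : ℕ) :
    cosineEntry n a j * cosineEntry n b j =
      cosineEntry n (a + b) j + cosineEntry n (a - b) j - if j = 0 then 1 else 0 := by
  by_cases hj : j = 0
  · simp [cosineEntry, hj]
  · have h := two_mul_cos_mul_cos (2 * π * a * j / n) (2 * π * b * j / n)
    simp only [cosineEntry, hj, if_false, Int.cast_add, Int.cast_sub]
    rw [show 2 * π * (a - b) * j / n = 2 * π * a * j / n - 2 * π * b * j / n by ring,
      show 2 * π * (a + b) * j / n = 2 * π * a * j / n + 2 * π * b * j / n by ring]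
    linear_combination 2 * h

theorem sum_range_cosineEntry_mul (N : ℕ) (a b : ℤ) :
    ∑ j ∈ range (N + 1), cosineEntry (2 * N + 1) a j * cosineEntry (2 * N + 1) b j =
      (if ((2 * N + 1 : ℕ) : ℤ) ∣ a + b then ((2 * N + 1 : ℕ) : ℝ) else 0) +
      (if ((2 * N + 1 : ℕ) : ℤ) ∣ a - b then ((2 * N + 1 : ℕ) : ℝ) else 0) - 1 := by
  simp only [cosineEntry_mul, sum_sub_distrib, sum_add_distrib, sum_range_cosineEntry,
    sum_ite_eq', mem_range, Nat.zero_lt_succ, if_true]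

open Matrix

theorem Matrix.mul_transpose_apply_eq_sum_range {R : Type*} [NonUnitalNonAssocSemiring R] {m n : ℕ}
    (A : Matrix (Fin m) (Fin n) R) {u v : Fin m} {f g : ℕ → R}
    (hu : ∀ j, A u j = f j) (hv : ∀ j, A v j = g j) :
    (A * Aᵀ) u v = ∑ j ∈ range n, f j * g j := by
  simp only [mul_apply, transpose_apply, hu, hv]
  exact Fin.sum_univ_eq_sum_range (fun j => f j * g j) n

theorem cosine_matrix_gram_general (p s N : ℕ) (hodd : Odd p)
    (hN : N = (p ^ s - 1) / 2)
    (C : Matrix (Fin (N + 1)) (Fin (N + 1)) ℝ)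
    (hC : ∀ i j : Fin (N + 1), C i j =
      if i.val = N then 1
      else if j.val = 0 then 1
      else 2 * Real.cos (2 * Real.pi * (i.val + 1) * j.val / (p : ℝ) ^ s)) :
    (∀ u : Fin (N + 1), u.val < N → (C * Cᵀ) u u = 2 * N) ∧
    (∀ u : Fin (N + 1), u.val = N → (C * Cᵀ) u u = N + 1) ∧
    (∀ u v : Fin (N + 1), u.val < N → v.val < N → u ≠ v → (C * Cᵀ) u v = -1) ∧
    (∀ u v : Fin (N + 1), u.val < N → v.val = N →
      (C * Cᵀ) u v = 0 ∧ (C * Cᵀ) v u = 0) := by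
  have hps : p ^ s = 2 * N + 1 := by
    have := Nat.two_mul_div_two_add_one_of_odd (hodd.pow (n := s))
    omega
  have hrow (i : Fin (N + 1)) (hi : i.val < N) (j : Fin (N + 1)) :
      C i j = cosineEntry (2 * N + 1) (i.val + 1) j.val := by
    rw [hC, if_neg hi.ne, cosineEntry, ← hps]
    push_cast
    rfl
  have hlast (i : Fin (N + 1)) (hi : i.val = N) (j : Fin (N + 1)) : C i j = 1 := by
    rw [hC, if_pos hi]
  have hndvd (a : ℤ) (ha : a ≠ 0) (hlt : -(2 * N + 1 : ℤ) < a ∧ a < 2 * N + 1) :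
      ¬ ((2 * N + 1 : ℕ) : ℤ) ∣ a := fun hdvd =>
    ha (Int.eq_zero_of_abs_lt_dvd hdvd (by push_cast; exact abs_lt.2 hlt))
  have hrow_sum (u : Fin (N + 1)) (hu : u.val < N) :
      ∑ j ∈ range (N + 1), cosineEntry (2 * N + 1) (u.val + 1) j = 0 := by
    rw [sum_range_cosineEntry, if_neg (hndvd _ (by omega) (by omega))]
  refine ⟨fun u hu => ?_, fun u hu => ?_, fun u v hu hv huv => ?_, fun u v hu hv => ⟨?_, ?_⟩⟩
  · rw [mul_transpose_apply_eq_sum_range C (hrow u hu) (hrow u hu), sum_range_cosineEntry_mul,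
      sub_self, if_neg (hndvd _ (by omega) (by omega)), if_pos (dvd_zero _)]
    push_cast
    ring
  · simp [mul_transpose_apply_eq_sum_range C (f := 1) (g := 1) (hlast u hu) (hlast u hu)]
  · have huv' : (u.val : ℤ) ≠ v.val := by exact_mod_cast Fin.val_ne_of_ne huv
    rw [mul_transpose_apply_eq_sum_range C (hrow u hu) (hrow v hv), sum_range_cosineEntry_mul,
      if_neg (hndvd _ (by omega) (by omega)), if_neg (hndvd _ (by omega) (by omega))]
    ring
  · rw [mul_transpose_apply_eq_sum_range C (g := 1) (hrow u hu) (hlast v hv)]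
    simpa only [Pi.one_apply, mul_one] using hrow_sum u hu
  · rw [mul_transpose_apply_eq_sum_range C (f := 1) (hlast v hv) (hrow u hu)]
    simpa only [Pi.one_apply, one_mul] using hrow_sum u hu

/-- Gram matrix of the rows of the cosine matrix for `n = p^s`.
The cosine matrix `C` has rows indexed by `i = 1, …, N+1` (here `i : Fin (N+1)`
represents row `i.val + 1`) and columns by `j = 0, …, N`; its entries are
`C_{i,0} = 1`, `C_{i,j} = 2·cos(2π·i·j/p^s)` for `1 ≤ i ≤ N`, `1 ≤ j ≤ N`, and the
last row (`i = N+1`) is all ones.  Then `C·Cᵀ` has diagonal entries `2N`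
(resp. `N+1` in the last position) and off-diagonal entries `−1` (resp. `0` in
the last row/column). -/
theorem cosine_matrix_gram (p s N : ℕ) (hp : p.Prime) (hodd : Odd p) (hs : 1 ≤ s)
    (hN : N = (p ^ s - 1) / 2)
    (C : Matrix (Fin (N + 1)) (Fin (N + 1)) ℝ)
    (hC : ∀ i j : Fin (N + 1), C i j =
      if i.val = N then 1
      else if j.val = 0 then 1
      else 2 * Real.cos (2 * Real.pi * (i.val + 1) * j.val / (p : ℝ) ^ s)) :
    (∀ u : Fin (N + 1), u.val < N → (C * Cᵀ) u u = 2 * N) ∧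
    (∀ u : Fin (N + 1), u.val = N → (C * Cᵀ) u u = N + 1) ∧
    (∀ u v : Fin (N + 1), u.val < N → v.val < N → u ≠ v → (C * Cᵀ) u v = -1) ∧
    (∀ u v : Fin (N + 1), u.val < N → v.val = N →
      (C * Cᵀ) u v = 0 ∧ (C * Cᵀ) v u = 0) :=
  cosine_matrix_gram_general p s N hodd hN C hC
end

section
/- Let p be an odd prime, s ≥ 1, N = (p^s − 1)/2, and let C be the cosine matrix of size N+1. Then C is invertible and its Frobenius condition number satisfies κ_F(C) = ‖C‖_F·‖C⁻¹‖_F < √2·(N+1). -/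
open Matrix

noncomputable def frobNorm {n : ℕ} (A : Matrix (Fin n) (Fin n) ℝ) : ℝ :=
  Real.sqrt (∑ i, ∑ j, (A i j) ^ 2)

/-!
Put `q = 2N + 1 = p ^ s`. Telescoping `2 sin(θ/2) cos(iθ) = sin((i + 1/2)θ) - sin((i - 1/2)θ)`
gives `∑_{i=1}^N 2 cos(2π i k / q) = -1` whenever `q ∤ k`, and with the product-to-sum formula
this makes the Gram matrix `CᵀC` explicit: `N + 1` in the corner, zeros in the rest of the
first row and column, `2N` on the rest of the diagonal and `-1` elsewhere. That is
`q I - N E₀₀ - u uᵀ` with `u` the indicator of the nonzero indices; since `E₀₀` and `u uᵀ`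
multiply like orthogonal idempotents (up to `u ⬝ u = N`), its inverse is again a combination
of `I`, `E₀₀` and `u uᵀ`. Finally `‖A‖_F² = tr(AᵀA)` and `‖A⁻¹‖_F² = tr((AᵀA)⁻¹)`, so
`κ_F(C)² = tr(CᵀC) tr((CᵀC)⁻¹)`, a rational function of `N` that stays below `2(N + 1)²`.
-/

open Real Finset

theorem sin_half_mul_sum_range_two_cos (θ : ℝ) (n : ℕ) :
    sin (θ / 2) * ∑ i ∈ range n, 2 * cos ((i + 1) * θ) =
      sin ((n + 1 / 2) * θ) - sin (θ / 2) := by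
  rw [mul_sum]
  convert sum_range_sub (fun i : ℕ => sin ((i + 1 / 2) * θ)) n using 2 with i
  · rw [show ((i + 1 : ℕ) + 1 / 2) * θ = (i + 1) * θ + θ / 2 by push_cast; ring,
      show (i + 1 / 2) * θ = (i + 1) * θ - θ / 2 by ring, sin_add, sin_sub]
    ring
  · simp [div_eq_inv_mul]

theorem sum_range_two_cos_eq_neg_one (n : ℕ) (k : ℤ) (hk : ¬ (2 * n + 1 : ℤ) ∣ k) :
    ∑ i ∈ range n, 2 * cos (2 * π * (i + 1) * k / (2 * n + 1)) = -1 := by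
  set θ := 2 * π * k / (2 * n + 1)
  have hsin : sin (θ / 2) ≠ 0 := by
    rw [Ne, sin_eq_zero_iff]
    rintro ⟨m, hm⟩
    refine hk ⟨m, ?_⟩
    have : (k : ℝ) = (2 * n + 1) * m := by
      refine mul_right_cancel₀ pi_ne_zero ?_
      rw [mul_assoc, hm]
      simp only [θ]
      field_simp
    exact_mod_cast this
  have hend : sin ((n + 1 / 2) * θ) = 0 := by
    rw [show (n + 1 / 2) * θ = k * π by simp only [θ]; field_simp]
    exact sin_int_mul_pi k
  have htelescope := sin_half_mul_sum_range_two_cos θ n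
  rw [hend, zero_sub] at htelescope
  rw [← mul_right_inj' hsin, mul_neg_one, ← htelescope]
  congr 1
  refine sum_congr rfl fun i _ => ?_
  simp only [θ]
  ring_nf

theorem sum_range_two_cos_mul_two_cos (n a b : ℕ) (ha : a ∈ Icc 1 n) (hb : b ∈ Icc 1 n) :
    ∑ i ∈ range n, 2 * cos (2 * π * (i + 1) * a / (2 * n + 1)) *
      (2 * cos (2 * π * (i + 1) * b / (2 * n + 1))) =
      if a = b then (2 * n - 1 : ℝ) else -2 := by
  rw [mem_Icc] at ha hb
  have not_dvd (k : ℤ) (hk0 : k ≠ 0) (hk : |k| < 2 * n + 1) : ¬ (2 * n + 1 : ℤ) ∣ k :=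
    fun h => hk0 (Int.eq_zero_of_abs_lt_dvd h hk)
  have product_to_sum (i : ℕ) : 2 * cos (2 * π * (i + 1) * a / (2 * n + 1)) *
      (2 * cos (2 * π * (i + 1) * b / (2 * n + 1))) =
      2 * cos (2 * π * (i + 1) * ((a + b : ℕ) : ℤ) / (2 * n + 1)) +
      2 * cos (2 * π * (i + 1) * ((a : ℤ) - b : ℤ) / (2 * n + 1)) := by
    rw [show 2 * π * (i + 1) * ((a + b : ℕ) : ℤ) / (2 * n + 1) =
        2 * π * (i + 1) * a / (2 * n + 1) + 2 * π * (i + 1) * b / (2 * n + 1) by push_cast; ring,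
      show 2 * π * (i + 1) * ((a : ℤ) - b : ℤ) / (2 * n + 1) =
        2 * π * (i + 1) * a / (2 * n + 1) - 2 * π * (i + 1) * b / (2 * n + 1) by push_cast; ring,
      cos_add, cos_sub]
    ring
  simp only [product_to_sum, sum_add_distrib]
  rw [sum_range_two_cos_eq_neg_one n _ (not_dvd _ (by omega) (by rw [abs_lt]; omega))]
  split_ifs with hab
  · subst hab
    simp only [sub_self, Int.cast_zero, mul_zero, zero_div, cos_zero, mul_one, sum_const,
      card_range, nsmul_eq_mul]
    ring
  · rw [sum_range_two_cos_eq_neg_one n _ (not_dvd _ (by omega) (by rw [abs_lt]; omega))]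
    norm_num

theorem frobNorm_eq_sqrt_trace {n : ℕ} (A : Matrix (Fin n) (Fin n) ℝ) :
    frobNorm A = √(trace (Aᵀ * A)) := by
  rw [frobNorm, sum_comm]
  simp [trace, mul_apply, sq]

theorem frobNorm_inv_eq_sqrt_trace {n : ℕ} (A : Matrix (Fin n) (Fin n) ℝ) :
    frobNorm A⁻¹ = √(trace (Aᵀ * A)⁻¹) := by
  rw [frobNorm_eq_sqrt_trace, Matrix.mul_inv_rev, transpose_nonsing_inv, trace_mul_comm]

noncomputable section

def cosineMatrix (N : ℕ) : Matrix (Fin (N + 1)) (Fin (N + 1)) ℝ := fun i j =>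
  if i.val = N then 1
  else if j.val = 0 then 1
  else 2 * cos (2 * π * (i.val + 1) * j.val / (2 * N + 1))

def nonzeroIndicator (N : ℕ) : Fin (N + 1) → ℝ := Fin.cons 0 1

def cosineGram (N : ℕ) : Matrix (Fin (N + 1)) (Fin (N + 1)) ℝ :=
  (2 * N + 1 : ℝ) • 1 - (N : ℝ) • single 0 0 1 -
    vecMulVec (nonzeroIndicator N) (nonzeroIndicator N)

def cosineGramInv (N : ℕ) : Matrix (Fin (N + 1)) (Fin (N + 1)) ℝ :=
  (2 * N + 1 : ℝ)⁻¹ • 1 + (N / ((2 * N + 1) * (N + 1)) : ℝ) • single 0 0 1 +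
    ((2 * N + 1) * (N + 1) : ℝ)⁻¹ • vecMulVec (nonzeroIndicator N) (nonzeroIndicator N)

end

section cosineMatrix

variable (N : ℕ)

theorem cosineMatrix_last (j : Fin (N + 1)) : cosineMatrix N (Fin.last N) j = 1 := by
  simp [cosineMatrix]

theorem cosineMatrix_castSucc_zero (i : Fin N) : cosineMatrix N i.castSucc 0 = 1 := by
  simp [cosineMatrix, i.isLt.ne]

theorem cosineMatrix_castSucc_succ (i j : Fin N) :
    cosineMatrix N i.castSucc j.succ =
      2 * cos (2 * π * (i + 1) * ((j + 1 : ℕ) : ℝ) / (2 * N + 1)) := by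
  simp [cosineMatrix, i.isLt.ne]

@[simp] theorem cosineGram_zero_zero : cosineGram N 0 0 = N + 1 := by
  simp only [cosineGram, smul_single, smul_eq_mul, mul_one, nonzeroIndicator, Matrix.sub_apply,
    Matrix.smul_apply, one_apply_eq, single_apply_same, vecMulVec_apply, Fin.cons_zero, mul_zero,
    sub_zero]
  ring

@[simp] theorem cosineGram_zero_succ (b : Fin N) : cosineGram N 0 b.succ = 0 := by
  simp [cosineGram, vecMulVec_apply, nonzeroIndicator, single, one_apply,
    (Fin.succ_ne_zero b).symm]

@[simp] theorem cosineGram_succ_zero (a : Fin N) : cosineGram N a.succ 0 = 0 := by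
  simp [cosineGram, vecMulVec_apply, nonzeroIndicator, single, one_apply,
    (Fin.succ_ne_zero a).symm]

@[simp] theorem cosineGram_succ_succ (a b : Fin N) :
    cosineGram N a.succ b.succ = if a = b then (2 * N : ℝ) else -1 := by
  simp only [cosineGram, single, smul_of, nonzeroIndicator, Matrix.sub_apply, Matrix.smul_apply,
    one_apply, Fin.succ_inj, smul_eq_mul, mul_ite, mul_one, mul_zero, of_apply, Pi.smul_apply,
    (Fin.succ_ne_zero a).symm, false_and, ↓reduceIte, sub_zero, vecMulVec_apply, Fin.cons_succ,
    Pi.one_apply]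
  split_ifs <;> ring

theorem transpose_cosineMatrix_mul_self : (cosineMatrix N)ᵀ * cosineMatrix N = cosineGram N := by
  have column_sum (b : Fin N) :
      ∑ i : Fin N, 2 * cos (2 * π * ((i : ℕ) + 1) * ((b : ℕ) + 1) / (2 * N + 1)) = -1 := by
    have hb : ¬ (2 * N + 1 : ℤ) ∣ ((b + 1 : ℕ) : ℤ) := fun h => by
      have := Int.le_of_dvd (by omega) h
      omega
    rw [Fin.sum_univ_eq_sum_range
      (fun i => 2 * cos (2 * π * (i + 1) * ((b : ℕ) + 1) / (2 * N + 1)))]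
    exact_mod_cast sum_range_two_cos_eq_neg_one N _ hb
  ext a b
  rw [mul_apply, Fin.sum_univ_castSucc]
  simp only [transpose_apply, cosineMatrix_last, mul_one]
  induction a using Fin.cases with
  | zero =>
    induction b using Fin.cases with
    | zero => simp [cosineMatrix_castSucc_zero]
    | succ b => simp [cosineMatrix_castSucc_zero, cosineMatrix_castSucc_succ, column_sum]
  | succ a =>
    induction b using Fin.cases with
    | zero => simp [cosineMatrix_castSucc_zero, cosineMatrix_castSucc_succ, column_sum]
    | succ b =>
      simp only [cosineMatrix_castSucc_succ]
      rw [Fin.sum_univ_eq_sum_range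
          (fun i => 2 * cos (2 * π * (i + 1) * ((a + 1 : ℕ) : ℝ) / (2 * N + 1)) *
            (2 * cos (2 * π * (i + 1) * ((b + 1 : ℕ) : ℝ) / (2 * N + 1)))),
        sum_range_two_cos_mul_two_cos N _ _ (by simp) (by simp)]
      simp only [Nat.add_right_cancel_iff, Fin.val_inj, cosineGram_succ_succ]
      split_ifs <;> ring

theorem nonzeroIndicator_dotProduct_self : nonzeroIndicator N ⬝ᵥ nonzeroIndicator N = N := by
  simp [dotProduct, Fin.sum_univ_succ, nonzeroIndicator]

theorem single_zero_mul_vecMulVec_nonzeroIndicator :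
    single 0 0 (1 : ℝ) * vecMulVec (nonzeroIndicator N) (nonzeroIndicator N) = 0 := by
  ext a b
  simp [single, mul_apply, vecMulVec_apply, nonzeroIndicator, ite_and]

theorem vecMulVec_nonzeroIndicator_mul_single_zero :
    vecMulVec (nonzeroIndicator N) (nonzeroIndicator N) * single 0 0 (1 : ℝ) = 0 := by
  ext a b
  simp [single, mul_apply, vecMulVec_apply, nonzeroIndicator, ite_and]

theorem cosineGramInv_mul_cosineGram : cosineGramInv N * cosineGram N = 1 := by
  have hJJ : vecMulVec (nonzeroIndicator N) (nonzeroIndicator N) *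
      vecMulVec (nonzeroIndicator N) (nonzeroIndicator N) =
      (N : ℝ) • vecMulVec (nonzeroIndicator N) (nonzeroIndicator N) := by
    rw [vecMulVec_mul_vecMulVec, nonzeroIndicator_dotProduct_self, vecMulVec_smul]
  simp only [cosineGramInv, cosineGram, mul_sub, add_mul, Matrix.mul_one,
    single_mul_single_same, one_mul, hJJ, single_zero_mul_vecMulVec_nonzeroIndicator,
    vecMulVec_nonzeroIndicator_mul_single_zero, smul_zero, mul_smul_comm, smul_mul_assoc]
  match_scalars <;> field_simp <;> ring

theorem trace_cosineGram : trace (cosineGram N) = 2 * N ^ 2 + N + 1 := by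
  simp only [cosineGram, smul_single, smul_eq_mul, mul_one, trace_sub, trace_smul, trace_one,
    Fintype.card_fin, Nat.cast_add, Nat.cast_one, trace_single_eq_same, trace_vecMulVec,
    nonzeroIndicator_dotProduct_self]
  ring

theorem trace_cosineGramInv :
    trace (cosineGramInv N) = ((N + 1) ^ 2 + 2 * N) / ((2 * N + 1) * (N + 1)) := by
  simp only [cosineGramInv, smul_single, smul_eq_mul, mul_one, _root_.mul_inv_rev, trace_add,
    trace_smul, trace_one, Fintype.card_fin, Nat.cast_add, Nat.cast_one, trace_single_eq_same,
    trace_vecMulVec, nonzeroIndicator_dotProduct_self]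
  field_simp
  ring

theorem trace_cosineGram_mul_trace_cosineGramInv_lt :
    trace (cosineGram N) * trace (cosineGramInv N) < 2 * (N + 1) ^ 2 := by
  rw [trace_cosineGram, trace_cosineGramInv, ← mul_div_assoc, div_lt_iff₀ (by positivity),
    ← sub_pos]
  have : 2 * ((N : ℝ) + 1) ^ 2 * ((2 * N + 1) * (N + 1)) -
      (2 * N ^ 2 + N + 1) * ((N + 1) ^ 2 + 2 * N) =
      2 * N ^ 4 + 5 * N ^ 3 + 11 * N ^ 2 + 5 * N + 1 := by
    ring
  rw [this]
  positivity

end cosineMatrix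

theorem cosine_matrix_cond_lt_general (p s N : ℕ) (hodd : Odd p)
    (hN : N = (p ^ s - 1) / 2)
    (C : Matrix (Fin (N + 1)) (Fin (N + 1)) ℝ)
    (hC : ∀ i j : Fin (N + 1), C i j =
      if i.val = N then 1
      else if j.val = 0 then 1
      else 2 * Real.cos (2 * Real.pi * (i.val + 1) * j.val / (p : ℝ) ^ s)) :
    IsUnit C.det ∧ frobNorm C * frobNorm C⁻¹ < Real.sqrt 2 * (N + 1) := by
  have hq : (p : ℝ) ^ s = 2 * N + 1 := by
    obtain ⟨t, ht⟩ := hodd.pow (n := s)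
    exact_mod_cast (show p ^ s = 2 * N + 1 by omega)
  obtain rfl : C = cosineMatrix N := by
    ext i j
    rw [hC, hq]
    rfl
  have hgram := transpose_cosineMatrix_mul_self N
  have hleft : (cosineGramInv N * (cosineMatrix N)ᵀ) * cosineMatrix N = 1 := by
    rw [Matrix.mul_assoc, hgram, cosineGramInv_mul_cosineGram]
  refine ⟨isUnit_det_of_left_inverse hleft, ?_⟩
  rw [frobNorm_eq_sqrt_trace, frobNorm_inv_eq_sqrt_trace, hgram,
    inv_eq_left_inv (cosineGramInv_mul_cosineGram N),
    ← sqrt_mul (by rw [trace_cosineGram]; positivity), sqrt_lt' (by positivity), mul_pow,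
    sq_sqrt zero_le_two]
  exact trace_cosineGram_mul_trace_cosineGramInv_lt N

/-- For an odd prime `p`, `s ≥ 1`, `N = (p^s − 1)/2`, the cosine matrix
`C` of size `N+1` is invertible and its Frobenius condition number satisfies
`κ_F(C) = ‖C‖_F·‖C⁻¹‖_F < √2·(N+1)`. -/
theorem cosine_matrix_cond_lt (p s N : ℕ) (hp : p.Prime) (hodd : Odd p) (hs : 1 ≤ s)
    (hN : N = (p ^ s - 1) / 2)
    (C : Matrix (Fin (N + 1)) (Fin (N + 1)) ℝ)
    (hC : ∀ i j : Fin (N + 1), C i j =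
      if i.val = N then 1
      else if j.val = 0 then 1
      else 2 * Real.cos (2 * Real.pi * (i.val + 1) * j.val / (p : ℝ) ^ s)) :
    IsUnit C.det ∧ frobNorm C * frobNorm C⁻¹ < Real.sqrt 2 * (N + 1) :=
  cosine_matrix_cond_lt_general p s N hodd hN C hC
end
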